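/- arXiv:math/0401410 — 7 statements merged into one kernel-verified Lean document; each statement's English description precedes it below -/
import Mathlib

section
/- Let σ be a real symmetric positive definite 2×2 matrix satisfying C₀⁻¹ I ≤ σ ≤ C₀ I for some C₀ ≥ 1. Define the Beltrami coefficient μ = (−σ₁₁ + σ₂₂ − 2i σ₁₂)/(σ₁₁ + σ₂₂ + 2√(det σ)). Then |μ| ≤ (C₀ − 1)/(C₀ + 1) < 1. -/
/-! Write `T = tr σ` and `D = det σ`. As `(σ₂₂ - σ₁₁)² + 4σ₁₂² = T² - 4D`, we get
`|μ|² = (T - 2√D) / (T + 2√D)`, which increases with `T / √D`. Eigenvalues in `[a, b]` force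
`ab T² ≤ (a + b)² D`, so for `a = C₀⁻¹`, `b = C₀` we get `T / √D ≤ C₀ + C₀⁻¹`, the value at which
`|μ|² = ((C₀ - 1) / (C₀ + 1))²`. -/

open Matrix Complex

namespace Matrix

theorem mul_trace_sq_le_mul_det_of_posSemidef {σ : Matrix (Fin 2) (Fin 2) ℝ} {a b : ℝ}
    (ha : 0 ≤ a) (hlow : (σ - a • 1).PosSemidef) (hup : (b • 1 - σ).PosSemidef) :
    a * b * σ.trace ^ 2 ≤ (a + b) ^ 2 * σ.det := by
  have hσ : σ 1 0 = σ 0 1 := by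
    simpa using congrFun (congrFun hlow.isHermitian 0) 1
  have hl0 : a ≤ σ 0 0 := by simpa using hlow.diag_nonneg (i := 0)
  have hl1 : a ≤ σ 1 1 := by simpa using hlow.diag_nonneg (i := 1)
  have hu0 : σ 0 0 ≤ b := by simpa using hup.diag_nonneg (i := 0)
  have hu1 : σ 1 1 ≤ b := by simpa using hup.diag_nonneg (i := 1)
  have hdet_low : σ 0 1 ^ 2 ≤ (σ 0 0 - a) * (σ 1 1 - a) := by
    simpa [det_fin_two, hσ, sq] using hlow.det_nonneg
  have hdet_up : σ 0 1 ^ 2 ≤ (b - σ 0 0) * (b - σ 1 1) := by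
    simpa [det_fin_two, hσ, sq] using hup.det_nonneg
  rw [det_fin_two, trace_fin_two, hσ]
  set T := σ 0 0 + σ 1 1
  -- `det (σ - a) ≥ 0` gives `(a + b)² D - ab T² ≥ a (a + b - T) (bT - a (a + b))`,
  -- and `det (b - σ) ≥ 0` the same with the roles of `a` and `b` exchanged.
  rcases le_total T (a + b) with hT | hT
  · have hfactor : 0 ≤ b * T - a * (a + b) := by nlinarith
    nlinarith [mul_nonneg (mul_nonneg ha (sub_nonneg.2 hT)) hfactor, sq_nonneg (a + b)]
  · have hfactor : 0 ≤ b * (a + b) - a * T := by nlinarith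
    nlinarith [mul_nonneg (mul_nonneg (ha.trans (hl0.trans hu0)) (sub_nonneg.2 hT)) hfactor,
      sq_nonneg (a + b)]

end Matrix

noncomputable def beltramiCoeff (σ : Matrix (Fin 2) (Fin 2) ℝ) : ℂ :=
  ((σ 1 1 - σ 0 0 : ℝ) - 2 * (σ 0 1 : ℂ) * I) / ((σ.trace + 2 * √σ.det : ℝ) : ℂ)

theorem sq_norm_beltramiCoeff {σ : Matrix (Fin 2) (Fin 2) ℝ} (hσ : σ 1 0 = σ 0 1)
    (hdet : 0 ≤ σ.det) (htr : 0 < σ.trace) :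
    ‖beltramiCoeff σ‖ ^ 2 = (σ.trace - 2 * √σ.det) / (σ.trace + 2 * √σ.det) := by
  have hden : 0 < σ.trace + 2 * √σ.det := by positivity
  have hnum : ‖((σ 1 1 - σ 0 0 : ℝ) : ℂ) - 2 * (σ 0 1 : ℂ) * I‖ ^ 2
      = (σ.trace - 2 * √σ.det) * (σ.trace + 2 * √σ.det) := by
    rw [Complex.sq_norm, Complex.normSq_apply]
    have hsq : √σ.det ^ 2 = σ 0 0 * σ 1 1 - σ 0 1 ^ 2 := by
      rw [Real.sq_sqrt hdet, det_fin_two, hσ, sq]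
    simp only [sub_re, sub_im, ofReal_re, ofReal_im, mul_re, mul_im, I_re, I_im, re_ofNat, im_ofNat,
      trace_fin_two]
    linear_combination 4 * hsq
  rw [beltramiCoeff, norm_div, div_pow, hnum, Complex.norm_real, Real.norm_of_nonneg hden.le]
  field_simp

theorem sub_two_mul_div_add_two_mul_le_sq {T r C : ℝ} (hC : 0 < C) (hr : 0 ≤ r) (hT : 0 < T)
    (h : T ≤ (C⁻¹ + C) * r) : (T - 2 * r) / (T + 2 * r) ≤ ((C - 1) / (C + 1)) ^ 2 := by
  rw [div_pow, div_le_div_iff₀ (by positivity) (by positivity)]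
  have hCT : C * T ≤ (1 + C ^ 2) * r :=
    calc C * T ≤ C * ((C⁻¹ + C) * r) := by gcongr
      _ = (1 + C ^ 2) * r := by field_simp
  nlinarith

theorem norm_beltramiCoeff_le {σ : Matrix (Fin 2) (Fin 2) ℝ} {C : ℝ} (hC : 1 ≤ C)
    (hlow : (σ - C⁻¹ • 1).PosSemidef) (hup : (C • 1 - σ).PosSemidef) :
    ‖beltramiCoeff σ‖ ≤ (C - 1) / (C + 1) := by
  have hC_pos : 0 < C := one_pos.trans_le hC
  have hσ : σ 1 0 = σ 0 1 := by
    simpa using congrFun (congrFun hlow.isHermitian 0) 1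
  have htr : 0 < σ.trace := by
    have := hlow.trace_nonneg
    simp only [trace_sub, trace_smul, trace_one, Fintype.card_fin, smul_eq_mul] at this
    nlinarith [inv_pos.2 hC_pos]
  have hkey : σ.trace ^ 2 ≤ (C⁻¹ + C) ^ 2 * σ.det := by
    simpa [inv_mul_cancel₀ hC_pos.ne'] using
      mul_trace_sq_le_mul_det_of_posSemidef (inv_nonneg.2 hC_pos.le) hlow hup
  have hdet : 0 ≤ σ.det := nonneg_of_mul_nonneg_right ((sq_nonneg _).trans hkey) (by positivity)
  have hratio : σ.trace ≤ (C⁻¹ + C) * √σ.det := by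
    refine (pow_le_pow_iff_left₀ htr.le (by positivity) two_ne_zero).1 ?_
    rwa [mul_pow, Real.sq_sqrt hdet]
  have hbound : 0 ≤ (C - 1) / (C + 1) := div_nonneg (sub_nonneg.2 hC) (by positivity)
  rw [← pow_le_pow_iff_left₀ (norm_nonneg _) hbound two_ne_zero, sq_norm_beltramiCoeff hσ hdet htr]
  exact sub_two_mul_div_add_two_mul_le_sq hC_pos (Real.sqrt_nonneg _) htr hratio

theorem beltrami_coeff_bound (s11 s12 s22 C0 : ℝ) (hC0 : 1 ≤ C0)
    (hlow : ((!![s11, s12; s12, s22] : Matrix (Fin 2) (Fin 2) ℝ) - C0⁻¹ • 1).PosSemidef)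
    (hup : ((C0 • 1 - !![s11, s12; s12, s22] : Matrix (Fin 2) (Fin 2) ℝ)).PosSemidef)
    (μ : ℂ)
    (hμ : μ = ((- s11 + s22 : ℝ) - 2 * (s12 : ℂ) * Complex.I) /
      ((s11 + s22 + 2 * Real.sqrt (s11 * s22 - s12 ^ 2) : ℝ) : ℂ)) :
    ‖μ‖ ≤ (C0 - 1) / (C0 + 1) ∧ (C0 - 1) / (C0 + 1) < 1 := by
  have hμσ : μ = beltramiCoeff !![s11, s12; s12, s22] := by
    simp [hμ, beltramiCoeff, trace_fin_two, det_fin_two, neg_add_eq_sub, sq]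
  refine ⟨hμσ ▸ norm_beltramiCoeff_le hC0 hlow hup, ?_⟩
  rw [div_lt_one (by linarith)]
  linarith
end

section
/- Let μ₁ ∈ ℂ and μ₂ ∈ ℝ with |μ₁| ≤ κ < 1 and |μ₂| ≤ κ. Define ν₁ = μ₁ (1 − μ₂²)/(1 − |μ₁|² μ₂²) and ν₂ = μ₂ (1 − |μ₁|²)/(1 − |μ₁|² μ₂²). Then |ν₁| + |ν₂| = (|μ₁| + |μ₂|)/(1 + |μ₁|·|μ₂|) ≤ 2κ/(1 + κ²) < 1. -/
/-!
Write `a = ‖μ₁‖`, `b = |μ₂|`. Since `1 - a²b² = (1 - ab)(1 + ab)` and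
`a(1 - b²) + b(1 - a²) = (a + b)(1 - ab)`, the sum `‖ν₁‖ + |ν₂|` is the "velocity addition"
`(a + b)/(1 + ab)`. This expression is increasing in `a` and in `b` on `[0, 1]`, so it is at most
its value `2κ/(1 + κ²)` at `a = b = κ`, and `2κ < 1 + κ²` because `(1 - κ)² > 0`.
-/

lemma mul_div_add_mul_div_one_sub_sq_mul_sq {a b : ℝ} (h : 1 - a ^ 2 * b ^ 2 ≠ 0) :
    a * (1 - b ^ 2) / (1 - a ^ 2 * b ^ 2) + b * (1 - a ^ 2) / (1 - a ^ 2 * b ^ 2) =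
      (a + b) / (1 + a * b) := by
  have hfactor : 1 - a ^ 2 * b ^ 2 = (1 - a * b) * (1 + a * b) := by ring
  rw [hfactor, mul_ne_zero_iff] at h
  rw [hfactor, ← add_div, div_eq_div_iff (mul_ne_zero h.1 h.2) h.2]
  ring

lemma add_div_one_add_mul_le {a b κ : ℝ} (ha : 0 ≤ a) (hb : 0 ≤ b) (haκ : a ≤ κ) (hbκ : b ≤ κ)
    (hκ : κ ≤ 1) : (a + b) / (1 + a * b) ≤ 2 * κ / (1 + κ ^ 2) := by
  rw [div_le_div_iff₀ (by positivity) (by positivity)]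
  -- `2κ(1 + ab) - (a + b)(1 + κ²) = (κ - a)(1 - bκ) + (κ - b)(1 - aκ)`
  nlinarith [mul_nonneg (sub_nonneg.2 haκ) (by nlinarith : (0 : ℝ) ≤ 1 - b * κ),
    mul_nonneg (sub_nonneg.2 hbκ) (by nlinarith : (0 : ℝ) ≤ 1 - a * κ)]

lemma two_mul_div_one_add_sq_lt_one {κ : ℝ} (hκ : κ ≠ 1) : 2 * κ / (1 + κ ^ 2) < 1 := by
  rw [div_lt_one (by positivity)]
  nlinarith [sq_pos_of_ne_zero (sub_ne_zero.2 hκ)]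

theorem nu_coeff_bound (μ1 : ℂ) (μ2 κ : ℝ)
    (hκ : κ < 1) (h1 : ‖μ1‖ ≤ κ) (h2 : |μ2| ≤ κ)
    (ν1 : ℂ) (ν2 : ℝ)
    (hν1 : ν1 = μ1 * ((1 - μ2 ^ 2 : ℝ) / (1 - ‖μ1‖ ^ 2 * μ2 ^ 2) : ℝ))
    (hν2 : ν2 = μ2 * (1 - ‖μ1‖ ^ 2) / (1 - ‖μ1‖ ^ 2 * μ2 ^ 2)) :
    ‖ν1‖ + |ν2| = (‖μ1‖ + |μ2|) / (1 + ‖μ1‖ * |μ2|) ∧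
    (‖μ1‖ + |μ2|) / (1 + ‖μ1‖ * |μ2|) ≤ 2 * κ / (1 + κ ^ 2) ∧
    2 * κ / (1 + κ ^ 2) < 1 := by
  rw [← sq_abs μ2] at hν1 hν2
  set a := ‖μ1‖
  set b := |μ2|
  have ha : 0 ≤ a := norm_nonneg μ1
  have hb : 0 ≤ b := abs_nonneg μ2
  have ha1 : a < 1 := h1.trans_lt hκ
  have hb1 : b < 1 := h2.trans_lt hκ
  have hD : 0 < 1 - a ^ 2 * b ^ 2 := by
    nlinarith [mul_lt_one_of_nonneg_of_lt_one_left ha ha1 hb1.le, mul_nonneg ha hb]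
  have hnorm1 : ‖ν1‖ = a * (1 - b ^ 2) / (1 - a ^ 2 * b ^ 2) := by
    rw [hν1, norm_mul, Complex.norm_real, Real.norm_of_nonneg (by bound), mul_div_assoc]
  have hnorm2 : |ν2| = b * (1 - a ^ 2) / (1 - a ^ 2 * b ^ 2) := by
    rw [hν2, abs_div, abs_mul, abs_of_nonneg (by nlinarith : (0 : ℝ) ≤ 1 - a ^ 2), abs_of_pos hD]
  refine ⟨?_, add_div_one_add_mul_le ha hb h1 h2 hκ.le, two_mul_div_one_add_sq_lt_one hκ.ne⟩
  rw [hnorm1, hnorm2, mul_div_add_mul_div_one_sub_sq_mul_sq hD.ne']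
end

section
/- Let 0 ≤ κ' < 1 and let ν₁ ∈ ℂ, ν₂ ∈ ℝ with |ν₁| + |ν₂| ≤ κ'. Then there exist unique μ₁ ∈ ℂ and μ₂ ∈ ℝ with |μ₁| < 1 and |μ₂| < 1 such that ν₁ = μ₁(1 − μ₂²)/(1 − |μ₁|²μ₂²) and ν₂ = μ₂(1 − |μ₁|²)/(1 − |μ₁|²μ₂²). -/
set_option maxHeartbeats 1000000


noncomputable def th (x : ℝ) : ℝ := (Real.exp (2*x) - 1) / (Real.exp (2*x) + 1)
noncomputable def ath (y : ℝ) : ℝ := Real.log ((1+y)/(1-y)) / 2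

lemma th_abs_lt_one (x : ℝ) : |th x| < 1 := by
  have h := Real.exp_pos (2*x)
  rw [abs_lt, th]
  constructor
  · rw [lt_div_iff₀ (by linarith)]; linarith
  · rw [div_lt_iff₀ (by linarith)]; linarith

lemma th_ath {y : ℝ} (hy : |y| < 1) : th (ath y) = y := by
  rw [abs_lt] at hy
  have h1 : (0:ℝ) < 1 + y := by linarith
  have h2 : (0:ℝ) < 1 - y := by linarith
  have hexp : Real.exp (2 * ath y) = (1+y)/(1-y) := by
    rw [ath]
    rw [show 2 * (Real.log ((1+y)/(1-y)) / 2) = Real.log ((1+y)/(1-y)) by ring]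
    exact Real.exp_log (by positivity)
  rw [th, hexp]
  field_simp
  ring

lemma ath_th (x : ℝ) : ath (th x) = x := by
  have h := Real.exp_pos (2*x)
  have h1 : (0:ℝ) < Real.exp (2*x) + 1 := by linarith
  have key : (1 + th x) / (1 - th x) = Real.exp (2*x) := by
    rw [th]
    field_simp
    ring
  rw [ath, key, Real.log_exp]
  ring

lemma th_add (x y : ℝ) : th (x+y) * (1 + th x * th y) = th x + th y := by
  have hx := Real.exp_pos (2*x)
  have hy := Real.exp_pos (2*y)
  have hxy : Real.exp (2*(x+y)) = Real.exp (2*x) * Real.exp (2*y) := by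
    rw [← Real.exp_add]; ring_nf
  have hx1 : Real.exp (2*x) + 1 ≠ 0 := by linarith
  have hy1 : Real.exp (2*y) + 1 ≠ 0 := by linarith
  have hxy1 : Real.exp (2*x) * Real.exp (2*y) + 1 ≠ 0 := by positivity
  rw [th, th, th, hxy]
  field_simp
  ring

lemma th_zero : th 0 = 0 := by norm_num [th]

lemma th_neg (x : ℝ) : th (-x) = - th x := by
  have h := th_add x (-x)
  rw [show x + -x = (0:ℝ) by ring, th_zero] at h
  simp at h
  linarith

lemma key (r s : ℝ) (hr : 0 ≤ r) (h1 : r + |s| < 1) :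
    ∃! q : ℝ × ℝ, 0 ≤ q.1 ∧ q.1 < 1 ∧ |q.2| < 1 ∧
      r = q.1 * (1 - q.2^2) / (1 - q.1^2 * q.2^2) ∧
      s = q.2 * (1 - q.1^2) / (1 - q.1^2 * q.2^2) := by
  have hs := abs_nonneg s
  have hsa := le_abs_self s
  have hsb := neg_abs_le s
  have hu : |r + s| < 1 := by rw [abs_lt]; constructor <;> nlinarith
  have hv : |r - s| < 1 := by rw [abs_lt]; constructor <;> nlinarith
  set α : ℝ := (ath (r+s) + ath (r-s))/2 with hα
  set β : ℝ := (ath (r+s) - ath (r-s))/2 with hβ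
  set a : ℝ := th α with ha
  set t : ℝ := th β with ht
  have ha1 : |a| < 1 := th_abs_lt_one α
  have ht1 : |t| < 1 := th_abs_lt_one β
  rw [abs_lt] at ha1 ht1
  -- basic positivity
  have hat1 : 1 + a*t > 0 := by nlinarith
  have hat2 : 1 - a*t > 0 := by nlinarith
  have hD : 1 - a^2*t^2 > 0 := by nlinarith
  have htt : 1 - t^2 > 0 := by nlinarith
  have haa : 1 - a^2 > 0 := by nlinarith
  -- th relations
  have hU : th (α + β) = r + s := by
    rw [show α + β = ath (r+s) by rw [hα, hβ]; ring, th_ath hu]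
  have hV : th (α - β) = r - s := by
    rw [show α - β = ath (r-s) by rw [hα, hβ]; ring, th_ath hv]
  have hu2 : (r+s) * (1 + a*t) = a + t := by
    have := th_add α β
    rw [hU] at this; rw [this]
  have hv2 : (r-s) * (1 - a*t) = a - t := by
    have := th_add α (-β)
    have hnb : th (-β) = -t := by
      have h0 := th_add β (-β)
      have : th (β + -β) = 0 := by
        norm_num [th]
      rw [this] at h0
      have h2 : (0:ℝ) = t + th (-β) := by simpa using h0
      linarith
    rw [show α + -β = α - β by ring, hV, hnb] at this
    linarith [this]
  have he1 : r = a * (1 - t^2) / (1 - a^2*t^2) := by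
    rw [eq_div_iff hD.ne']
    linear_combination ((1-a*t)/2) * hu2 + ((1+a*t)/2) * hv2
  have he2 : s = t * (1 - a^2) / (1 - a^2*t^2) := by
    rw [eq_div_iff hD.ne']
    linear_combination ((1-a*t)/2) * hu2 - ((1+a*t)/2) * hv2
  have ha0 : 0 ≤ a := by
    have : r * (1 - a^2*t^2) = a * (1 - t^2) := by
      rw [he1]; field_simp
    nlinarith [mul_nonneg hr hD.le]
  refine ⟨(a, t), ⟨ha0, ha1.2, abs_lt.mpr ht1, he1, he2⟩, ?_⟩
  rintro ⟨a', t'⟩ ⟨ha'0, ha'1, ht'1, he1', he2'⟩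
  simp only at *
  rw [abs_lt] at ht'1
  have hat1' : 1 + a'*t' > 0 := by nlinarith
  have hat2' : 1 - a'*t' > 0 := by nlinarith
  have hD' : 1 - a'^2*t'^2 > 0 := by nlinarith
  -- derive u,v equations for primed
  have hr1 : r * (1 - a'^2*t'^2) = a' * (1 - t'^2) := by
    rw [he1']; field_simp
  have hs1 : s * (1 - a'^2*t'^2) = t' * (1 - a'^2) := by
    rw [he2', div_mul_cancel₀ _ hD'.ne']
  have hu2' : (r+s) * (1 + a'*t') = a' + t' := by
    have hne : (1 - a'*t') ≠ 0 := hat2'.ne'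
    have : ((r+s) * (1 + a'*t') - (a' + t')) * (1 - a'*t') = 0 := by linear_combination hr1 + hs1
    rcases mul_eq_zero.mp this with h | h
    · linarith
    · exact absurd h hne
  have hv2' : (r-s) * (1 - a'*t') = a' - t' := by
    have hne : (1 + a'*t') ≠ 0 := hat1'.ne'
    have : ((r-s) * (1 - a'*t') - (a' - t')) * (1 + a'*t') = 0 := by linear_combination hr1 - hs1
    rcases mul_eq_zero.mp this with h | h
    · linarith
    · exact absurd h hne
  -- ath identities
  have keyrel : ∀ x y : ℝ, -1 < x → x < 1 → -1 < y → y < 1 →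
      (r+s) * (1 + x*y) = x + y → (r-s) * (1 - x*y) = x - y →
      ath (r+s) = ath x + ath y ∧ ath (r-s) = ath x - ath y := by
    intro x y hx1 hx2 hy1 hy2 hxy1 hxy2
    have hax : |x| < 1 := abs_lt.mpr ⟨hx1, hx2⟩
    have hay : |y| < 1 := abs_lt.mpr ⟨hy1, hy2⟩
    have hp1 : 1 + x*y > 0 := by nlinarith
    have hp2 : 1 - x*y > 0 := by nlinarith
    constructor
    · have : th (ath x + ath y) = r + s := by
        have h := th_add (ath x) (ath y)
        rw [th_ath hax, th_ath hay] at h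
        have : th (ath x + ath y) * (1 + x*y) = (r+s) * (1+x*y) := by rw [h, hxy1]
        exact mul_right_cancel₀ hp1.ne' this
      rw [← this, ath_th]
    · have : th (ath x - ath y) = r - s := by
        have h := th_add (ath x) (-(ath y))
        rw [th_ath hax, th_neg, th_ath hay] at h
        have e : ath x + -ath y = ath x - ath y := by ring
        rw [e] at h
        have h2 : th (ath x - ath y) * (1 - x*y) = (r-s) * (1-x*y) := by
          rw [hxy2]; linear_combination h
        exact mul_right_cancel₀ hp2.ne' h2
      rw [← this, ath_th]
  have k1 := keyrel a t ha1.1 ha1.2 ht1.1 ht1.2 hu2 hv2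
  have k2 := keyrel a' t' (by linarith) ha'1 ht'1.1 ht'1.2 hu2' hv2'
  have haa' : ath a' = ath a := by linarith [k1.1, k1.2, k2.1, k2.2]
  have htt' : ath t' = ath t := by linarith [k1.1, k1.2, k2.1, k2.2]
  have ea : a' = a := by
    have := congrArg th haa'
    rwa [th_ath (abs_lt.mpr ⟨by linarith, ha'1⟩), th_ath (abs_lt.mpr ha1)] at this
  have et : t' = t := by
    have := congrArg th htt'
    rwa [th_ath (abs_lt.mpr ht'1), th_ath (abs_lt.mpr ht1)] at this
  exact Prod.ext ea et

theorem mu_from_nu_exists_unique (κ' : ℝ) (hκ0 : 0 ≤ κ') (hκ : κ' < 1)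
    (ν1 : ℂ) (ν2 : ℝ) (h : ‖ν1‖ + |ν2| ≤ κ') :
    ∃! p : ℂ × ℝ, ‖p.1‖ < 1 ∧ |p.2| < 1 ∧
      ν1 = p.1 * ((1 - p.2 ^ 2 : ℝ) / (1 - ‖p.1‖ ^ 2 * p.2 ^ 2) : ℝ) ∧
      ν2 = p.2 * (1 - ‖p.1‖ ^ 2) / (1 - ‖p.1‖ ^ 2 * p.2 ^ 2) := by
  have hr : 0 ≤ ‖ν1‖ := norm_nonneg _
  have hlt : ‖ν1‖ + |ν2| < 1 := lt_of_le_of_lt h hκ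
  obtain ⟨⟨a, t⟩, ⟨ha0, ha1, ht1, he1, he2⟩, huniq⟩ := key (‖ν1‖) ν2 hr hlt
  simp only at ha0 ha1 ht1 he1 he2
  have ht1' := abs_lt.mp ht1
  have hsq1 : a^2 < 1 := by nlinarith
  have htt : (0:ℝ) < 1 - t^2 := by nlinarith [ht1'.1, ht1'.2]
  have hD : (0:ℝ) < 1 - a^2*t^2 := by nlinarith [sq_nonneg a, sq_nonneg t]
  set m : ℂ := ν1 * (((1 - a^2*t^2)/(1 - t^2) : ℝ) : ℂ) with hm
  have habs : ‖m‖ = a := by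
    rw [hm, norm_mul, Complex.norm_real, Real.norm_eq_abs, abs_of_pos (by positivity), he1]
    field_simp
  have hone : ((1 - a^2*t^2)/(1 - t^2)) * ((1 - t^2)/(1 - a^2*t^2)) = 1 := by
    field_simp
  refine ⟨(m, t), ⟨?_, ht1, ?_, ?_⟩, ?_⟩
  · simpa [habs] using ha1
  · show ν1 = m * _
    rw [habs, hm, mul_assoc, ← Complex.ofReal_mul, hone]
    simp
  · show ν2 = t * _ / _
    rw [habs]
    exact he2
  · rintro ⟨m', t'⟩ ⟨h1', h2', h3', h4'⟩
    simp only at h1' h2' h3' h4' ⊢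
    set a' : ℝ := ‖m'‖ with ha'
    have ha'0 : 0 ≤ a' := norm_nonneg _
    have ht2' := abs_lt.mp h2'
    have hsq1' : a'^2 < 1 := by nlinarith
    have htt'' : (0:ℝ) < 1 - t'^2 := by nlinarith [ht2'.1, ht2'.2]
    have hD' : (0:ℝ) < 1 - a'^2*t'^2 := by nlinarith [sq_nonneg a', sq_nonneg t']
    have hre1 : ‖ν1‖ = a' * (1 - t'^2) / (1 - a'^2*t'^2) := by
      rw [h3', norm_mul, Complex.norm_real, Real.norm_eq_abs, abs_of_pos (by positivity), ← ha',
        mul_div_assoc]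
    have hq := huniq (a', t') ⟨ha'0, h1', h2', hre1, h4'⟩
    have ea : a' = a := congrArg Prod.fst hq
    have et : t' = t := congrArg Prod.snd hq
    rw [ea, et] at h3'
    have em : m' = m := by
      rw [hm, h3', mul_assoc, ← Complex.ofReal_mul,
        (show ((1 - t^2)/(1 - a^2*t^2)) * ((1 - a^2*t^2)/(1 - t^2)) = 1 by
          field_simp; exact div_self (ne_of_gt (by linarith [hD, mul_comm (t^2) (a^2)])))]
      simp
    exact Prod.ext em et
end

section
/- Let σ be a real symmetric positive definite 2×2 matrix. Define μ₁ = (−σ₁₁ + σ₂₂ − 2iσ₁₂)/(σ₁₁ + σ₂₂ + 2√(det σ)), μ₂ = (1 − √(det σ))/(1 + √(det σ)), ν₁ = μ₁(1 − μ₂²)/(1 − |μ₁|²μ₂²) and ν₂ = μ₂(1 − |μ₁|²)/(1 − |μ₁|²μ₂²). Then ν₁ = (σ₂₂ − σ₁₁ − 2iσ₁₂)/(1 + tr σ + det σ) and ν₂ = (1 − det σ)/(1 + tr σ + det σ). -/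
open Matrix

/-! With `r = √(det σ)` and `t = tr σ`, the identity `(σ₂₂ - σ₁₁)² + 4σ₁₂² = t² - 4r²` gives
`|μ₁|² = (t - 2r)/(t + 2r)`, and then `1 - |μ₁|²μ₂² = 4r(1 + t + r²)/((t + 2r)(1 + r)²)`;
both formulas follow by cancelling this common denominator. -/

lemma Matrix.PosDef.det_pos_fin_two_of {a b c : ℝ}
    (h : (!![a, b; b, c] : Matrix (Fin 2) (Fin 2) ℝ).PosDef) :
    0 < a * c - b ^ 2 := by
  simpa [det_fin_two_of, sq] using h.det_pos

lemma Matrix.PosDef.trace_pos_fin_two_of {a b c : ℝ}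
    (h : (!![a, b; b, c] : Matrix (Fin 2) (Fin 2) ℝ).PosDef) :
    0 < a + c := by
  simpa [trace_fin_two_of] using h.trace_pos

lemma norm_sq_beltrami_of_sq_eq_det {a b c r : ℝ} (hr : r ^ 2 = a * c - b ^ 2)
    (h : a + c + 2 * r ≠ 0) :
    ‖(((-a + c : ℝ) : ℂ) - 2 * b * Complex.I) / ((a + c + 2 * r : ℝ) : ℂ)‖ ^ 2
      = (a + c - 2 * r) / (a + c + 2 * r) := by
  rw [Complex.sq_norm, Complex.normSq_div, Complex.normSq_ofReal, div_eq_div_iff (by positivity) h]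
  simp only [Complex.normSq_apply, Complex.sub_re, Complex.sub_im, Complex.mul_re, Complex.mul_im,
    Complex.ofReal_re, Complex.ofReal_im, Complex.I_re, Complex.I_im, Complex.re_ofNat,
    Complex.im_ofNat]
  linear_combination (4 * (a + c) + 8 * r) * hr

section
variable {r t : ℝ}

lemma one_sub_mul_sq_eq (hr : 0 < r) (ht : 0 ≤ t) :
    1 - (t - 2 * r) / (t + 2 * r) * ((1 - r) / (1 + r)) ^ 2
      = 4 * r * (1 + t + r ^ 2) / ((t + 2 * r) * (1 + r) ^ 2) := by
  have : t + 2 * r ≠ 0 := by positivity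
  field_simp
  ring

lemma one_sub_sq_div_one_sub_mul_sq (hr : 0 < r) (ht : 0 ≤ t) :
    (1 - ((1 - r) / (1 + r)) ^ 2) / (1 - (t - 2 * r) / (t + 2 * r) * ((1 - r) / (1 + r)) ^ 2)
      = (t + 2 * r) / (1 + t + r ^ 2) := by
  rw [one_sub_mul_sq_eq hr ht]
  have : t + 2 * r ≠ 0 := by positivity
  field_simp
  ring

lemma mul_one_sub_div_one_sub_mul_sq (hr : 0 < r) (ht : 0 ≤ t) :
    (1 - r) / (1 + r) * (1 - (t - 2 * r) / (t + 2 * r))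
        / (1 - (t - 2 * r) / (t + 2 * r) * ((1 - r) / (1 + r)) ^ 2)
      = (1 - r ^ 2) / (1 + t + r ^ 2) := by
  rw [one_sub_mul_sq_eq hr ht]
  have : t + 2 * r ≠ 0 := by positivity
  field_simp
  ring

end

theorem nu_formulas (s11 s12 s22 : ℝ)
    (hpd : (!![s11, s12; s12, s22] : Matrix (Fin 2) (Fin 2) ℝ).PosDef)
    (d t : ℝ) (hd : d = s11 * s22 - s12 ^ 2) (ht : t = s11 + s22)
    (μ1 : ℂ) (μ2 : ℝ)
    (hμ1 : μ1 = ((- s11 + s22 : ℝ) - 2 * (s12 : ℂ) * Complex.I) /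
      ((t + 2 * Real.sqrt d : ℝ) : ℂ))
    (hμ2 : μ2 = (1 - Real.sqrt d) / (1 + Real.sqrt d))
    (ν1 : ℂ) (ν2 : ℝ)
    (hν1 : ν1 = μ1 * ((1 - μ2 ^ 2 : ℝ) / (1 - ‖μ1‖ ^ 2 * μ2 ^ 2) : ℝ))
    (hν2 : ν2 = μ2 * (1 - ‖μ1‖ ^ 2) / (1 - ‖μ1‖ ^ 2 * μ2 ^ 2)) :
    ν1 = ((s22 - s11 : ℝ) - 2 * (s12 : ℂ) * Complex.I) / ((1 + t + d : ℝ) : ℂ) ∧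
    ν2 = (1 - d) / (1 + t + d) := by
  have hd0 : 0 < d := hd ▸ hpd.det_pos_fin_two_of
  have ht0 : 0 < t := ht ▸ hpd.trace_pos_fin_two_of
  set r := Real.sqrt d
  have hr : 0 < r := Real.sqrt_pos.mpr hd0
  have hr2 : r ^ 2 = d := Real.sq_sqrt hd0.le
  have htr : t + 2 * r ≠ 0 := by positivity
  have hμ1_norm : ‖μ1‖ ^ 2 = (t - 2 * r) / (t + 2 * r) := by
    subst ht
    rw [hμ1, norm_sq_beltrami_of_sq_eq_det (hr2.trans hd) htr]
  constructor
  · rw [hν1, hμ1_norm, hμ2, one_sub_sq_div_one_sub_mul_sq hr ht0.le, hμ1, hr2, Complex.ofReal_div,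
      div_mul_div_cancel₀ (Complex.ofReal_ne_zero.mpr htr), neg_add_eq_sub]
  · rw [hν2, hμ1_norm, hμ2, mul_one_sub_div_one_sub_mul_sq hr ht0.le, hr2]
end

section
/- Let σ be a real symmetric positive definite 2×2 matrix. The pair (ν₁, ν₂) with ν₁ = (σ₂₂ − σ₁₁ − 2iσ₁₂)/(1 + tr σ + det σ) ∈ ℂ and ν₂ = (1 − det σ)/(1 + tr σ + det σ) ∈ ℝ uniquely determines σ: if two symmetric positive definite 2×2 matrices σ and σ' give the same pair (ν₁, ν₂), then σ = σ'. -/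
/-!
Put `D = 1 + tr σ + det σ = det (1 + σ)`. The real part of `ν₁`, its imaginary part and `ν₂`
are affine in the entries of `D⁻¹ • (1 + σ)`, so `(ν₁, ν₂)` determines this normalized matrix.
For a `2 × 2` matrix `A` the determinant of `(det A)⁻¹ • A` is `(det A)⁻¹`, so the normalization
can be undone, which recovers `1 + σ` and hence `σ`.
-/

open Matrix

namespace Matrix

theorem det_inv_det_smul_fin_two {K : Type*} [Field K] (A : Matrix (Fin 2) (Fin 2) K)
    (hA : A.det ≠ 0) : (A.det⁻¹ • A).det = A.det⁻¹ := by
  rw [det_smul, Fintype.card_fin]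
  field_simp

theorem eq_of_inv_det_smul_eq_fin_two {K : Type*} [Field K] {A B : Matrix (Fin 2) (Fin 2) K}
    (hA : A.det ≠ 0) (hB : B.det ≠ 0) (h : A.det⁻¹ • A = B.det⁻¹ • B) : A = B := by
  have hdet : A.det = B.det := by
    simpa [det_inv_det_smul_fin_two A hA, det_inv_det_smul_fin_two B hB] using congrArg det h
  rwa [hdet, smul_right_inj (inv_ne_zero hB)] at h

theorem PosDef.det_one_add_pos {n : Type*} [Fintype n] [DecidableEq n]
    {A : Matrix n n ℝ} (hA : A.PosDef) : 0 < (1 + A).det :=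
  (PosDef.one.add hA).det_pos

theorem one_add_of_fin_two {R : Type*} [CommRing R] (a b c d : R) :
    1 + !![a, b; c, d] = !![1 + a, b; c, 1 + d] := by
  rw [one_fin_two, of_add_of]
  simp

theorem det_one_add_fin_two_of {R : Type*} [CommRing R] (a b c : R) :
    (1 + !![a, b; b, c]).det = 1 + (a + c) + (a * c - b ^ 2) := by
  rw [one_add_of_fin_two, det_fin_two_of]
  ring

end Matrix

noncomputable def normalizedOfNu (ν₁ : ℂ) (ν₂ : ℝ) : Matrix (Fin 2) (Fin 2) ℝ :=
  !![(1 + ν₂ - ν₁.re) / 2, -ν₁.im / 2; -ν₁.im / 2, (1 + ν₂ + ν₁.re) / 2]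

theorem re_im_nu₁ (a b c D : ℝ) :
    (((c - a : ℝ) - 2 * (b : ℂ) * Complex.I) / (D : ℂ)).re = (c - a) / D ∧
      (((c - a : ℝ) - 2 * (b : ℂ) * Complex.I) / (D : ℂ)).im = -2 * b / D := by
  simp only [Complex.div_ofReal_re, Complex.div_ofReal_im]
  simp

theorem normalizedOfNu_eq (a b c : ℝ) (hD : (1 + !![a, b; b, c]).det ≠ 0) :
    normalizedOfNu (((c - a : ℝ) - 2 * (b : ℂ) * Complex.I) /
        ((1 + (a + c) + (a * c - b ^ 2) : ℝ) : ℂ))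
      ((1 - (a * c - b ^ 2)) / (1 + (a + c) + (a * c - b ^ 2)))
      = (1 + !![a, b; b, c]).det⁻¹ • (1 + !![a, b; b, c]) := by
  rw [det_one_add_fin_two_of] at hD ⊢
  obtain ⟨hre, him⟩ := re_im_nu₁ a b c (1 + (a + c) + (a * c - b ^ 2))
  rw [normalizedOfNu, hre, him]
  ext i j
  fin_cases i <;> fin_cases j <;> simp <;> field_simp <;> ring

theorem nu_determines_sigma (s11 s12 s22 s11' s12' s22' : ℝ)
    (hpd : (!![s11, s12; s12, s22] : Matrix (Fin 2) (Fin 2) ℝ).PosDef)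
    (hpd' : (!![s11', s12'; s12', s22'] : Matrix (Fin 2) (Fin 2) ℝ).PosDef)
    (hν1 : ((s22 - s11 : ℝ) - 2 * (s12 : ℂ) * Complex.I) /
        ((1 + (s11 + s22) + (s11 * s22 - s12 ^ 2) : ℝ) : ℂ)
      = ((s22' - s11' : ℝ) - 2 * (s12' : ℂ) * Complex.I) /
        ((1 + (s11' + s22') + (s11' * s22' - s12' ^ 2) : ℝ) : ℂ))
    (hν2 : (1 - (s11 * s22 - s12 ^ 2)) / (1 + (s11 + s22) + (s11 * s22 - s12 ^ 2))
      = (1 - (s11' * s22' - s12' ^ 2)) / (1 + (s11' + s22') + (s11' * s22' - s12' ^ 2))) :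
    (!![s11, s12; s12, s22] : Matrix (Fin 2) (Fin 2) ℝ) = !![s11', s12'; s12', s22'] := by
  have hD := hpd.det_one_add_pos
  have hD' := hpd'.det_one_add_pos
  have hnormalized := congrArg₂ normalizedOfNu hν1 hν2
  rw [normalizedOfNu_eq _ _ _ hD.ne', normalizedOfNu_eq _ _ _ hD'.ne'] at hnormalized
  exact add_left_cancel (eq_of_inv_det_smul_eq_fin_two hD.ne' hD'.ne' hnormalized)
end

section
/- Let F : Ω → ℝ² be a map differentiable at x with Jacobian matrix DF(x) and Jacobian determinant J_F(x) = det DF(x) > 0, and let σ₀ be a symmetric 2×2 matrix satisfying C₀⁻¹I ≤ σ₀ ≤ C₀I. Suppose the push-forward matrix σ₁ = J_F(x)⁻¹ DF(x) σ₀ DF(x)ᵗ satisfies C₁⁻¹I ≤ σ₁ ≤ C₁I. Then ‖DF(x)‖² ≤ K J_F(x) with K = C₀C₁, where ‖·‖ denotes the operator norm. -/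
/-
The hypotheses are Loewner-order inequalities, and congruence by `A` preserves that order:
`A Aᵀ ≤ C₀ A σ₀ Aᵀ = C₀ J σ₁ ≤ C₀ C₁ J`. Since `‖A‖² = ‖Aᵀ‖² = sup_{|v| = 1} ⟪v, A Aᵀ v⟫`,
this is the claimed bound.
-/

open Matrix

namespace Matrix

variable {m n : Type*} [Fintype m] [Fintype n] [DecidableEq n]

theorem PosSemidef.dotProduct_mulVec_le_of_smul_one_sub {M : Matrix n n ℝ} {c : ℝ}
    (h : (c • 1 - M).PosSemidef) (x : n → ℝ) : x ⬝ᵥ M *ᵥ x ≤ c * (x ⬝ᵥ x) := by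
  have := h.dotProduct_mulVec_nonneg x
  simp only [sub_mulVec, smul_mulVec, one_mulVec, dotProduct_sub, dotProduct_smul, star_trivial,
    smul_eq_mul] at this
  linarith

theorem posSemidef_smul_one_sub_mul_transpose_of_pushforward [DecidableEq m] (A : Matrix m n ℝ)
    (σ : Matrix n n ℝ) {C₀ C₁ J : ℝ} (hC₀ : 0 < C₀) (hJ : 0 < J)
    (hσ : (σ - C₀⁻¹ • 1).PosSemidef) (hpush : (C₁ • 1 - J⁻¹ • (A * σ * Aᵀ)).PosSemidef) :
    ((C₀ * C₁ * J) • 1 - A * Aᵀ).PosSemidef := by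
  have hσA : (A * (σ - C₀⁻¹ • 1) * Aᵀ).PosSemidef := by
    simpa only [conjTranspose_eq_transpose_of_trivial] using hσ.mul_mul_conjTranspose_same A
  have hsplit : (C₀ * C₁ * J) • 1 - A * Aᵀ =
      (C₀ * J) • (C₁ • 1 - J⁻¹ • (A * σ * Aᵀ)) + C₀ • (A * (σ - C₀⁻¹ • 1) * Aᵀ) := by
    simp only [Matrix.mul_sub, Matrix.sub_mul, Matrix.mul_smul, Matrix.smul_mul, Matrix.mul_one,
      smul_sub, smul_smul, mul_inv_cancel_right₀ hJ.ne', mul_inv_cancel₀ hC₀.ne']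
    module
  rw [hsplit]
  exact (hpush.smul (by positivity)).add (hσA.smul hC₀.le)

open scoped Matrix.Norms.L2Operator in
theorem l2_opNorm_sq_le_of_posSemidef_smul_one_sub_mul_transpose [DecidableEq m]
    (A : Matrix m n ℝ) {c : ℝ} (hc : 0 ≤ c) (h : (c • 1 - A * Aᵀ).PosSemidef) : ‖A‖ ^ 2 ≤ c := by
  rw [← l2_opNorm_conjTranspose, l2_opNorm_def]
  refine (Real.le_sqrt (norm_nonneg _) hc).mp <|
    ContinuousLinearMap.opNorm_le_bound _ (Real.sqrt_nonneg c) fun x => ?_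
  rw [← sq_le_sq₀ (norm_nonneg _) (by positivity), mul_pow, Real.sq_sqrt hc]
  have hx := h.dotProduct_mulVec_le_of_smul_one_sub (WithLp.ofLp x)
  rw [← mulVec_mulVec, dotProduct_mulVec, ← mulVec_transpose] at hx
  rw [← real_inner_self_eq_norm_sq, ← real_inner_self_eq_norm_sq]
  exact hx

end Matrix

theorem quasiconformality_from_pushforward_general (A σ0 σ1 : Matrix (Fin 2) (Fin 2) ℝ)
    (C0 C1 : ℝ) (hC0 : 1 ≤ C0) (hC1 : 1 ≤ C1)
    (hdet : 0 < A.det)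
    (h0low : (σ0 - C0⁻¹ • 1).PosSemidef)
    (hσ1 : σ1 = A.det⁻¹ • (A * σ0 * Aᵀ))
    (h1up : (C1 • 1 - σ1).PosSemidef) :
    ‖LinearMap.toContinuousLinearMap (Matrix.toEuclideanLin A)‖ ^ 2 ≤ (C0 * C1) * A.det := by
  subst hσ1
  have hAAt := posSemidef_smul_one_sub_mul_transpose_of_pushforward A σ0 (by positivity) hdet
    h0low h1up
  exact l2_opNorm_sq_le_of_posSemidef_smul_one_sub_mul_transpose A (by positivity) hAAt

theorem quasiconformality_from_pushforward (A σ0 σ1 : Matrix (Fin 2) (Fin 2) ℝ)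
    (C0 C1 : ℝ) (hC0 : 1 ≤ C0) (hC1 : 1 ≤ C1)
    (hdet : 0 < A.det) (hA : IsUnit A.det)
    (hσ0sym : σ0.IsSymm)
    (h0low : (σ0 - C0⁻¹ • 1).PosSemidef) (h0up : (C0 • 1 - σ0).PosSemidef)
    (hσ1 : σ1 = A.det⁻¹ • (A * σ0 * Aᵀ))
    (h1low : (σ1 - C1⁻¹ • 1).PosSemidef) (h1up : (C1 • 1 - σ1).PosSemidef) :
    ‖LinearMap.toContinuousLinearMap (Matrix.toEuclideanLin A)‖ ^ 2 ≤ (C0 * C1) * A.det :=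
  quasiconformality_from_pushforward_general A σ0 σ1 C0 C1 hC0 hC1 hdet h0low hσ1 h1up
end

section
/- Let F = u + iv : ℝ² → ℂ be differentiable at a point with Jacobian matrix DF and Jacobian determinant J_F ≠ 0, and let G be a 2×2 real symmetric positive definite matrix with det G = 1. Then the equation J_F G = DFᵗ DF holds if and only if ∇v = J G⁻¹ ∇u, where J = [[0,−1],[1,0]]. -/
open Matrix

theorem jacobian_eq_iff_gradient_relation (F : ℂ → ℂ) (z : ℂ)
    (hF : DifferentiableAt ℝ F z)
    (u v : ℂ → ℝ) (hu : u = fun w => (F w).re) (hv : v = fun w => (F w).im)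
    (DF : Matrix (Fin 2) (Fin 2) ℝ)
    (hDF : DF = !![fderiv ℝ u z 1, fderiv ℝ u z Complex.I;
                   fderiv ℝ v z 1, fderiv ℝ v z Complex.I])
    (hJF : DF.det ≠ 0)
    (G : Matrix (Fin 2) (Fin 2) ℝ) (hG : G.PosDef) (hGdet : G.det = 1) :
    DF.det • G = DFᵀ * DF ↔
      ![fderiv ℝ v z 1, fderiv ℝ v z Complex.I] =
        ((!![0, -1; 1, 0] : Matrix (Fin 2) (Fin 2) ℝ) * G⁻¹).mulVec
          ![fderiv ℝ u z 1, fderiv ℝ u z Complex.I] := by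
  set a := fderiv ℝ u z 1 with ha
  set b := fderiv ℝ u z Complex.I with hb
  set c := fderiv ℝ v z 1 with hc
  set d := fderiv ℝ v z Complex.I with hd
  have hsym : G 1 0 = G 0 1 := by
    have h := hG.isHermitian
    have := congrFun (congrFun h.eq 0) 1
    simpa [Matrix.conjTranspose_apply] using this
  set p := G 0 0 with hp
  set q := G 0 1 with hq
  set r := G 1 1 with hr
  have hGeta : G = !![p, q; q, r] := by
    rw [Matrix.eta_fin_two G, hsym]
  have hdet1 : p * r - q * q = 1 := by
    rw [hGeta] at hGdet
    simpa [Matrix.det_fin_two_of] using hGdet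
  have hGinv : G⁻¹ = !![r, -q; -q, p] := by
    rw [Matrix.inv_def, hGdet, hGeta, Matrix.adjugate_fin_two]
    simp
  have hJ : DF.det = a * d - b * c := by
    rw [hDF]; simp [Matrix.det_fin_two_of]
  rw [hJ] at hJF
  rw [hJ, hDF, hGinv, hGeta,
    show (!![a, b; c, d])ᵀ = !![a, c; b, d] from (Matrix.transposeᵣ_eq _).symm]
  constructor
  · intro h
    have h00 := congrFun (congrFun h 0) 0
    have h01 := congrFun (congrFun h 0) 1
    have h11 := congrFun (congrFun h 1) 1
    simp [Matrix.mul_apply, Matrix.transpose_apply, Fin.sum_univ_two,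
      Matrix.smul_apply] at h00 h01 h11
    funext i
    fin_cases i <;>
      simp [Matrix.mulVec, Matrix.mul_apply, dotProduct, Fin.sum_univ_two]
    · refine mul_left_cancel₀ hJF ?_
      linear_combination b * h00 - a * h01
    · refine mul_left_cancel₀ hJF ?_
      linear_combination b * h01 - a * h11
  · intro h
    have h0 := congrFun h 0
    have h1 := congrFun h 1
    simp [Matrix.mulVec, Matrix.mul_apply, dotProduct, Fin.sum_univ_two] at h0 h1
    have hc2 : c = q * a - p * b := by linarith
    have hd2 : d = r * a - q * b := by linarith
    funext i j
    fin_cases i <;> fin_cases j <;>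
      simp [Matrix.mul_apply, Matrix.transpose_apply, Fin.sum_univ_two,
        Matrix.smul_apply] <;>
      rw [hc2, hd2]
    · linear_combination a ^ 2 * hdet1
    · linear_combination a * b * hdet1
    · linear_combination a * b * hdet1
    · linear_combination b ^ 2 * hdet1
end
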